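/- Let H be a finite dimensional Hilbert space, u a unitary on H, and p a nonzero orthogonal projection on H. Then |tr(pu)|/tr(p) ≤ DS_N(S_u(p)) + 2/N, where S_u(p) is the p-localized spectral measure of u. -/

import Mathlib

open MeasureTheory

/-- The resolution-N disuniformity of a measure on the circle T = [0,1). -/
noncomputable def DS (N : ℕ) (μ : Measure ℝ) : ℝ :=
  ∑ k ∈ Finset.range N, |(μ (Set.Ico ((k : ℝ) / N) (((k : ℝ) + 1) / N))).toReal - 1 / N|

/-- The localized spectral measure S_u(P) on the circle T = [0,1) associated to a
projection P, given eigendata (ϑ, t) of a unitary u: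
S_u(P) = (Σₖ ‖Pϑₖ‖² δ_{tₖ})/tr(P). -/
noncomputable def locSpec {H : Type*} [NormedAddCommGroup H] [InnerProductSpace ℂ H]
    [FiniteDimensional ℂ H] {d : ℕ} (ϑ : Fin d → H) (t : Fin d → ℝ)
    (P : H →ₗ[ℂ] H) : Measure ℝ :=
  (ENNReal.ofReal ((LinearMap.trace ℂ H P).re))⁻¹ •
    ∑ k, ENNReal.ofReal (‖P (ϑ k)‖ ^ 2) • Measure.dirac (t k)

/-!
Write `μ = S_u(p)`. Since `tr(pu) = Σₖ ‖pϑₖ‖² e^{2πitₖ}`, the left-hand side is `|∫ e^{2πix} dμ|`,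
which after rotating by the argument `φ` of the integral equals `∫ cos(2πx - φ) dμ`.
On the bin `[j/N, (j+1)/N)` the cosine is bounded by
`Mⱼ = min 1 (cos(2πj/N - φ) + positive variation of the cosine on the bin)`, so
`∫ cos(2πx - φ) dμ ≤ Σⱼ Mⱼ μ(bin j) ≤ DS_N(μ) + (Σⱼ Mⱼ)/N` because `|Mⱼ| ≤ 1`.
Finally `Σⱼ Mⱼ ≤ 2`: the left-endpoint values sum to zero (roots of unity, `N ≥ 2`) and the
positive variation of the cosine over a full period is `2`.
-/

open Real

theorem le_add_integral_max_zero_deriv {f f' : ℝ → ℝ} (hf : ∀ x, HasDerivAt f (f' x) x)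
    (hf' : Continuous f') {a b x : ℝ} (hx : x ∈ Set.Icc a b) :
    f x ≤ f a + ∫ s in a..b, max 0 (f' s) := by
  have hg : Continuous fun s => max 0 (f' s) := continuous_const.max hf'
  have hftc : f x - f a ≤ ∫ s in a..x, max 0 (f' s) := by
    rw [← intervalIntegral.integral_eq_sub_of_hasDerivAt (fun y _ => hf y)
      (hf'.intervalIntegrable a x)]
    exact intervalIntegral.integral_mono_on hx.1 (hf'.intervalIntegrable a x)
      (hg.intervalIntegrable a x) fun y _ => le_max_right _ _
  have hmono : ∫ s in a..x, max 0 (f' s) ≤ ∫ s in a..b, max 0 (f' s) :=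
    intervalIntegral.integral_mono_interval le_rfl hx.1 hx.2
      (Filter.Eventually.of_forall fun s => le_max_left _ _) (hg.intervalIntegrable a b)
  linarith

theorem integral_max_zero_neg_sin_period (a : ℝ) :
    ∫ x in a..a + 2 * π, max 0 (-sin x) = 2 := by
  have hper : Function.Periodic (fun x => max 0 (-sin x)) (2 * π) := fun x => by
    simp [sin_add_two_pi]
  have hcont : Continuous fun x => max 0 (-sin x) := by fun_prop
  rw [hper.intervalIntegral_add_eq a 0, zero_add,
    ← intervalIntegral.integral_add_adjacent_intervals (hcont.intervalIntegrable 0 π)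
      (hcont.intervalIntegrable π (2 * π))]
  have hfirst : ∫ x in (0 : ℝ)..π, max 0 (-sin x) = 0 := by
    rw [intervalIntegral.integral_congr (g := fun _ => (0 : ℝ)), intervalIntegral.integral_zero]
    intro x hx
    rw [Set.uIcc_of_le pi_nonneg] at hx
    simp [sin_nonneg_of_mem_Icc hx]
  have hsecond : ∫ x in π..2 * π, max 0 (-sin x) = 2 := by
    rw [intervalIntegral.integral_congr (g := fun x => -sin x)]
    · simp only [intervalIntegral.integral_neg, integral_sin, cos_pi, cos_two_pi]
      norm_num
    intro x hx
    rw [Set.uIcc_of_le (by linarith [pi_pos])] at hx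
    have : sin x ≤ 0 := by
      rw [← sin_sub_two_pi]
      exact sin_nonpos_of_nonpos_of_neg_pi_le (by linarith [hx.2]) (by linarith [hx.1])
    simp [this]
  rw [hfirst, hsecond, zero_add]

theorem hasDerivAt_cos_two_pi_mul_sub (φ x : ℝ) :
    HasDerivAt (fun x => cos (2 * π * x - φ)) (2 * π * -sin (2 * π * x - φ)) x := by
  convert (((hasDerivAt_id' x).const_mul (2 * π)).sub_const φ).cos using 1
  ring

theorem integral_max_zero_deriv_cos_two_pi_mul_sub (φ : ℝ) :
    ∫ s in (0 : ℝ)..1, max 0 (2 * π * -sin (2 * π * s - φ)) = 2 := by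
  have h2π : 0 < 2 * π := by positivity
  have hpull : ∀ s : ℝ,
      max 0 (2 * π * -sin (2 * π * s - φ)) = 2 * π * max 0 (-sin (2 * π * s - φ)) :=
    fun s => by rw [mul_max_of_nonneg _ _ h2π.le, mul_zero]
  simp_rw [hpull]
  rw [intervalIntegral.integral_const_mul,
    intervalIntegral.integral_comp_mul_sub (fun y => max 0 (-sin y)) h2π.ne', smul_eq_mul,
    mul_inv_cancel_left₀ h2π.ne', mul_zero, zero_sub, mul_one, sub_eq_neg_add,
    integral_max_zero_neg_sin_period]

theorem sum_cos_two_pi_mul_div_sub {N : ℕ} (hN : 2 ≤ N) (φ : ℝ) :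
    ∑ j ∈ Finset.range N, cos (2 * π * (j / N) - φ) = 0 := by
  have hζ := Complex.isPrimitiveRoot_exp N (by omega)
  have hterm : ∀ j : ℕ, cos (2 * π * (j / N) - φ) =
      (Complex.exp (-φ * Complex.I) * Complex.exp (2 * π * Complex.I / N) ^ j).re := by
    intro j
    rw [← Complex.exp_nat_mul, ← Complex.exp_add, ← Complex.exp_ofReal_mul_I_re]
    congr 2
    push_cast
    field_simp
    ring
  simp_rw [hterm, ← Complex.re_sum, ← Finset.mul_sum, hζ.geom_sum_eq_zero (by omega),
    mul_zero, Complex.zero_re]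

theorem exists_step_majorant_cos {N : ℕ} (hN : 0 < N) (φ : ℝ) :
    ∃ M : ℕ → ℝ, (∀ j, |M j| ≤ 1) ∧
      (∀ j : ℕ, ∀ x ∈ Set.Ico ((j : ℝ) / N) ((j + 1) / N), cos (2 * π * x - φ) ≤ M j) ∧
      ∑ j ∈ Finset.range N, M j ≤ 2 := by
  set g : ℝ → ℝ := fun s => max 0 (2 * π * -sin (2 * π * s - φ))
  have hg : Continuous g := by fun_prop
  set M : ℕ → ℝ := fun j =>
    min 1 (cos (2 * π * (j / N) - φ) + ∫ s in (j / N : ℝ)..(j + 1) / N, g s)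
  refine ⟨M, fun j => abs_le.mpr ⟨le_min (by norm_num) ?_, min_le_left _ _⟩,
    fun j x hx => le_min (cos_le_one _) ?_, ?_⟩
  · have hstep : (j / N : ℝ) ≤ (j + 1) / N := by gcongr; linarith
    linarith [neg_one_le_cos (2 * π * (j / N) - φ),
      intervalIntegral.integral_nonneg (μ := volume) (f := g) hstep fun s _ => le_max_left _ _]
  · exact le_add_integral_max_zero_deriv (hasDerivAt_cos_two_pi_mul_sub φ)
      (by fun_prop) (Set.Ico_subset_Icc_self hx)
  obtain rfl | hN2 : N = 1 ∨ 2 ≤ N := by omega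
  · simp [M]
  calc ∑ j ∈ Finset.range N, M j
      ≤ ∑ j ∈ Finset.range N,
          (cos (2 * π * (j / N) - φ) + ∫ s in (j / N : ℝ)..(j + 1) / N, g s) :=
        Finset.sum_le_sum fun j _ => min_le_right _ _
    _ = ∫ s in (0 : ℝ)..1, g s := by
        have hNR : (N : ℝ) ≠ 0 := by positivity
        rw [Finset.sum_add_distrib, sum_cos_two_pi_mul_div_sub hN2, zero_add]
        have := intervalIntegral.sum_integral_adjacent_intervals (μ := volume)
          (a := fun k : ℕ => (k : ℝ) / N) (n := N) fun k _ => hg.intervalIntegrable _ _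
        simpa [hNR] using this
    _ = 2 := integral_max_zero_deriv_cos_two_pi_mul_sub φ

theorem mem_Ico_div_iff_floor_eq {N : ℕ} (hN : 0 < N) {x : ℝ} (hx : 0 ≤ x) (j : ℕ) :
    x ∈ Set.Ico ((j : ℝ) / N) ((j + 1) / N) ↔ ⌊x * N⌋₊ = j := by
  have hNR : (0 : ℝ) < N := by exact_mod_cast hN
  rw [Set.mem_Ico, div_le_iff₀ hNR, lt_div_iff₀ hNR, Nat.floor_eq_iff (by positivity)]

theorem sum_indicator_Ico_div {N : ℕ} (hN : 0 < N) {x : ℝ} (hx : x ∈ Set.Ico (0 : ℝ) 1)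
    (M : ℕ → ℝ) :
    ∑ j ∈ Finset.range N, (Set.Ico ((j : ℝ) / N) ((j + 1) / N)).indicator (fun _ => M j) x =
      M ⌊x * N⌋₊ := by
  have hNR : (0 : ℝ) < N := by exact_mod_cast hN
  have hfloor : ⌊x * N⌋₊ ∈ Finset.range N := by
    rw [Finset.mem_range, Nat.floor_lt (by nlinarith [hx.1])]
    nlinarith [hx.2]
  simp_rw [Set.indicator_apply, mem_Ico_div_iff_floor_eq hN hx.1, Finset.sum_ite_eq,
    if_pos hfloor]

theorem integral_le_sum_measureReal_Ico_div_mul {μ : Measure ℝ} [IsFiniteMeasure μ]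
    (hμ : μ (Set.Ico 0 1)ᶜ = 0) {N : ℕ} (hN : 0 < N) {f : ℝ → ℝ} (hf : Integrable f μ)
    {M : ℕ → ℝ} (hfM : ∀ j : ℕ, ∀ x ∈ Set.Ico ((j : ℝ) / N) ((j + 1) / N), f x ≤ M j) :
    ∫ x, f x ∂μ ≤ ∑ j ∈ Finset.range N, μ.real (Set.Ico ((j : ℝ) / N) ((j + 1) / N)) * M j := by
  have hle : f ≤ᵐ[μ] fun x => ∑ j ∈ Finset.range N,
      (Set.Ico ((j : ℝ) / N) ((j + 1) / N)).indicator (fun _ => M j) x := by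
    filter_upwards [mem_ae_iff.mpr hμ] with x hx
    rw [sum_indicator_Ico_div hN hx]
    exact hfM _ x ((mem_Ico_div_iff_floor_eq hN hx.1 _).mpr rfl)
  refine (integral_mono_ae hf ?_ hle).trans_eq ?_
  · exact integrable_finsetSum _ fun j _ => (integrable_const _).indicator measurableSet_Ico
  · rw [integral_finsetSum _ fun j _ => (integrable_const _).indicator measurableSet_Ico]
    simp_rw [integral_indicator_const _ measurableSet_Ico, smul_eq_mul]

theorem sum_measureReal_Ico_div_mul_le_DS (μ : Measure ℝ) (N : ℕ) {M : ℕ → ℝ}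
    (hM : ∀ j, |M j| ≤ 1) :
    ∑ j ∈ Finset.range N, μ.real (Set.Ico ((j : ℝ) / N) ((j + 1) / N)) * M j ≤
      DS N μ + (∑ j ∈ Finset.range N, M j) / N := by
  rw [DS, Finset.sum_div, ← Finset.sum_add_distrib]
  refine Finset.sum_le_sum fun j _ => ?_
  set e := μ.real (Set.Ico ((j : ℝ) / N) ((j + 1) / N)) - 1 / N
  have he : e * M j ≤ |e| := calc
    e * M j ≤ |e * M j| := le_abs_self _
    _ = |e| * |M j| := abs_mul _ _
    _ ≤ |e| := mul_le_of_le_one_right (abs_nonneg _) (hM j)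
  calc μ.real (Set.Ico ((j : ℝ) / N) ((j + 1) / N)) * M j = e * M j + M j / N := by ring
    _ ≤ |e| + M j / N := by gcongr

theorem norm_integral_cexp_le_DS {μ : Measure ℝ} [IsFiniteMeasure μ]
    (hμ : μ (Set.Ico 0 1)ᶜ = 0) {N : ℕ} (hN : 0 < N) :
    ‖∫ x, Complex.exp (2 * π * Complex.I * x) ∂μ‖ ≤ DS N μ + 2 / N := by
  set z := ∫ x, Complex.exp (2 * π * Complex.I * x) ∂μ
  set φ := z.arg
  have hrot : ∀ x : ℝ, (Complex.exp (-φ * Complex.I) * Complex.exp (2 * π * Complex.I * x)).re =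
      cos (2 * π * x - φ) := fun x => by
    rw [← Complex.exp_add, ← Complex.exp_ofReal_mul_I_re]
    push_cast
    ring_nf
  have hint : Integrable (fun x : ℝ => Complex.exp (2 * π * Complex.I * x)) μ :=
    Integrable.of_bound (by fun_prop) 1
      (Filter.Eventually.of_forall fun x => by simp [Complex.norm_exp])
  have hnorm : ‖z‖ = ∫ x, cos (2 * π * x - φ) ∂μ := by
    have h : (‖z‖ : ℂ) = Complex.exp (-φ * Complex.I) * z := by
      conv_rhs => rw [← z.norm_mul_exp_arg_mul_I]
      rw [mul_left_comm, ← Complex.exp_add, neg_mul, neg_add_cancel, Complex.exp_zero, mul_one]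
    rw [← Complex.ofReal_re ‖z‖, h, ← integral_const_mul, ← RCLike.re_to_complex,
      ← integral_re (hint.const_mul _)]
    simp_rw [RCLike.re_to_complex, hrot]
  have hcos : Integrable (fun x => cos (2 * π * x - φ)) μ :=
    Integrable.of_bound (by fun_prop) 1
      (Filter.Eventually.of_forall fun x => by simpa using abs_cos_le_one _)
  obtain ⟨M, hM, hfM, hMsum⟩ := exists_step_majorant_cos hN φ
  calc ‖z‖ = ∫ x, cos (2 * π * x - φ) ∂μ := hnorm
    _ ≤ ∑ j ∈ Finset.range N, μ.real (Set.Ico ((j : ℝ) / N) ((j + 1) / N)) * M j :=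
      integral_le_sum_measureReal_Ico_div_mul hμ hN hcos hfM
    _ ≤ DS N μ + (∑ j ∈ Finset.range N, M j) / N := sum_measureReal_Ico_div_mul_le_DS μ N hM
    _ ≤ DS N μ + 2 / N := by gcongr

section LocSpec

variable {H : Type*} [NormedAddCommGroup H] [InnerProductSpace ℂ H] [FiniteDimensional ℂ H]
  {d : ℕ} (ϑ : Fin d → H) (t : Fin d → ℝ) (P : H →ₗ[ℂ] H)

theorem locSpec_apply {S : Set ℝ} (hS : MeasurableSet S) :
    locSpec ϑ t P S = (ENNReal.ofReal (LinearMap.trace ℂ H P).re)⁻¹ *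
      ∑ k, ENNReal.ofReal (‖P (ϑ k)‖ ^ 2) * S.indicator 1 (t k) := by
  simp [locSpec, Measure.dirac_apply' _ hS]

theorem locSpec_compl_eq_zero {S : Set ℝ} (hS : MeasurableSet S) (ht : ∀ k, t k ∈ S) :
    locSpec ϑ t P Sᶜ = 0 := by
  simp [locSpec_apply ϑ t P hS.compl, ht]

theorem isFiniteMeasure_locSpec (hP : 0 < (LinearMap.trace ℂ H P).re) :
    IsFiniteMeasure (locSpec ϑ t P) := by
  refine ⟨?_⟩
  rw [locSpec_apply ϑ t P MeasurableSet.univ]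
  refine ENNReal.mul_lt_top (ENNReal.inv_lt_top.mpr (ENNReal.ofReal_pos.mpr hP)) ?_
  exact ENNReal.sum_lt_top.mpr fun k _ => by simp

theorem integral_locSpec {E : Type*} [NormedAddCommGroup E] [NormedSpace ℝ E] [CompleteSpace E]
    (hP : 0 ≤ (LinearMap.trace ℂ H P).re) (g : ℝ → E) :
    ∫ x, g x ∂locSpec ϑ t P =
      ((LinearMap.trace ℂ H P).re)⁻¹ • ∑ k, ‖P (ϑ k)‖ ^ 2 • g (t k) := by
  rw [locSpec, integral_smul_measure, integral_finsetSum_measure fun k _ =>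
    (integrable_dirac (by simp)).smul_measure ENNReal.ofReal_ne_top]
  simp [integral_smul_measure, ENNReal.toReal_inv, ENNReal.toReal_ofReal hP]

end LocSpec

theorem Orthonormal.trace_eq_sum_inner {𝕜 E ι : Type*} [RCLike 𝕜] [NormedAddCommGroup E]
    [InnerProductSpace 𝕜 E] [FiniteDimensional 𝕜 E] [Fintype ι] {v : ι → E}
    (hv : Orthonormal 𝕜 v) (hcard : Module.finrank 𝕜 E = Fintype.card ι) (T : E →ₗ[𝕜] E) :
    LinearMap.trace 𝕜 E T = ∑ i, inner 𝕜 (v i) (T (v i)) := by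
  simpa using T.trace_eq_sum_inner
    (OrthonormalBasis.mk hv (hv.linearIndependent.span_eq_top_of_card_eq_finrank' hcard.symm).ge)

theorem LinearMap.inner_apply_self_eq_norm_sq {𝕜 E : Type*} [RCLike 𝕜] [NormedAddCommGroup E]
    [InnerProductSpace 𝕜 E] [FiniteDimensional 𝕜 E] {p : E →ₗ[𝕜] E} (hp : IsIdempotentElem p)
    (hpa : LinearMap.adjoint p = p) (x : E) :
    inner 𝕜 x (p x) = ((‖p x‖ ^ 2 : ℝ) : 𝕜) := by
  conv_lhs => rw [← hp.eq]
  rw [Module.End.mul_apply, ← LinearMap.adjoint_inner_left, hpa,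
    inner_self_eq_norm_sq_to_K, RCLike.ofReal_pow]

/-- |tr(pu)|/tr(p) ≤ DS_N(S_u(p)) + 2/N. -/
theorem stmt12 {H : Type*} [NormedAddCommGroup H] [InnerProductSpace ℂ H]
    [FiniteDimensional ℂ H]
    (N : ℕ) (hN : 0 < N) (d : ℕ) (hd : Module.finrank ℂ H = d)
    (u : H ≃ₗᵢ[ℂ] H) (ϑ : Fin d → H) (horth : Orthonormal ℂ ϑ)
    (t : Fin d → ℝ) (ht : ∀ k, t k ∈ Set.Ico (0 : ℝ) 1)
    (hu : ∀ k, u (ϑ k) = Complex.exp (2 * (Real.pi : ℂ) * Complex.I * (t k : ℂ)) • ϑ k)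
    (p : H →ₗ[ℂ] H) (hp : p ∘ₗ p = p) (hpa : LinearMap.adjoint p = p) (hp0 : p ≠ 0) :
    ‖LinearMap.trace ℂ H (p ∘ₗ (u.toLinearEquiv : H →ₗ[ℂ] H))‖ /
        (LinearMap.trace ℂ H p).re ≤
      DS N (locSpec ϑ t p) + 2 / N := by
  have hidem : IsIdempotentElem p := hp
  have hTpos : 0 < (LinearMap.trace ℂ H p).re := by
    rw [(LinearMap.IsIdempotentElem.isProj_range p hidem).trace, Complex.natCast_re,
      Nat.cast_pos, Module.finrank_pos_iff, Submodule.nontrivial_iff_ne_bot, Ne,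
      LinearMap.range_eq_bot]
    exact hp0
  have htrace : LinearMap.trace ℂ H (p ∘ₗ (u.toLinearEquiv : H →ₗ[ℂ] H)) =
      ∑ k, ‖p (ϑ k)‖ ^ 2 • Complex.exp (2 * π * Complex.I * t k) := by
    rw [horth.trace_eq_sum_inner (by simp [hd])]
    refine Finset.sum_congr rfl fun k _ => ?_
    rw [LinearMap.comp_apply, LinearEquiv.coe_coe, LinearIsometryEquiv.coe_toLinearEquiv, hu k,
      map_smul, inner_smul_right, LinearMap.inner_apply_self_eq_norm_sq hidem hpa,
      Complex.real_smul, mul_comm]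
    rfl
  have := isFiniteMeasure_locSpec ϑ t p hTpos
  calc ‖LinearMap.trace ℂ H (p ∘ₗ (u.toLinearEquiv : H →ₗ[ℂ] H))‖ / (LinearMap.trace ℂ H p).re
      = ‖∫ x, Complex.exp (2 * π * Complex.I * x) ∂locSpec ϑ t p‖ := by
        rw [integral_locSpec ϑ t p hTpos.le, ← htrace, norm_smul, Real.norm_of_nonneg
          (inv_nonneg.mpr hTpos.le), inv_mul_eq_div]
    _ ≤ DS N (locSpec ϑ t p) + 2 / N :=
        norm_integral_cexp_le_DS (locSpec_compl_eq_zero ϑ t p measurableSet_Ico ht) hN
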